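/- Let G be a permutation group on [n] with n ≥ 5. If for every transformation f : [n] → [n] of rank n−1 and every pair of disjoint 2-element subsets {a,b}, {c,d} of [n] there exists a transformation in the monoid generated by G ∪ {f} mapping exactly one of the two sets to a singleton, then G is primitive. -/

import Mathlib

/-!
Suppose `Δ` is a nontrivial block. We find a map `f` of rank `n - 1` and an irreflexive relation
preserved by `G` and by `f`, hence by the whole monoid generated by `G ∪ {f}`, which holds on two
disjoint pairs. No element of the monoid then collapses either pair, so the pairs are not
distinguished. If `|Δ| ≤ n - 2`, `f` merges two points of `Δ`, the relation is "distinct and not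
in a common translate of `Δ`", and each pair joins a point of `Δ` with a point outside it. If
`|Δ| = n - 1`, then `G` fixes the remaining point `u`, `f` sends `u` into `Δ`, and the relation is
"distinct and both different from `u`"; here `n ≥ 5` provides two disjoint pairs avoiding `u`.
-/

open Finset

/-- The set of functions on `Fin n` arising from elements of the permutation group `G`. -/
def permSet {n : ℕ} (G : Subgroup (Equiv.Perm (Fin n))) : Set (Function.End (Fin n)) :=
  {h | ∃ g ∈ G, h = ⇑g}

/-- The transformation monoid generated by `G ∪ {f}`. -/
def genMon {n : ℕ} (G : Subgroup (Equiv.Perm (Fin n))) (f : Fin n → Fin n) :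
    Submonoid (Function.End (Fin n)) :=
  Submonoid.closure (permSet G ∪ {f})

/-- A permutation group is primitive if no subset `Δ` with `1 < |Δ| < n` is a block. -/
def IsPrimitive' {n : ℕ} (G : Subgroup (Equiv.Perm (Fin n))) : Prop :=
  ¬ ∃ Δ : Finset (Fin n), 1 < Δ.card ∧ Δ.card < n ∧
      ∀ g ∈ G, Δ.image ⇑g = Δ ∨ Disjoint (Δ.image ⇑g) Δ

variable {n : ℕ}

def SeparatesDisjointPairs (G : Subgroup (Equiv.Perm (Fin n))) (f : Fin n → Fin n) : Prop :=
  ∀ A B : Finset (Fin n), A.card = 2 → B.card = 2 → Disjoint A B →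
    ∃ h ∈ genMon G f, Xor ((A.image h).card = 1) ((B.image h).card = 1)

def IsBlockOf (G : Subgroup (Equiv.Perm (Fin n))) (Δ : Finset (Fin n)) : Prop :=
  ∀ g ∈ G, Δ.image ⇑g = Δ ∨ Disjoint (Δ.image ⇑g) Δ

theorem card_image_update_id {α : Type*} [Fintype α] [DecidableEq α] {a b : α} (hab : a ≠ b) :
    (univ.image (Function.update id a b)).card = Fintype.card α - 1 := by
  have himage : univ.image (Function.update id a b) = univ.erase a := by
    ext z
    simp only [mem_image, mem_univ, true_and, mem_erase, and_true, Function.update_apply, id]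
    constructor
    · rintro ⟨x, rfl⟩
      split_ifs with hx
      exacts [hab.symm, hx]
    · exact fun hz => ⟨z, if_neg hz⟩
  rw [himage, card_erase_of_mem (mem_univ a), card_univ]

section Monoid

variable {G : Subgroup (Equiv.Perm (Fin n))} {f : Fin n → Fin n} {P : Fin n → Fin n → Prop}

theorem rel_map_of_mem_genMon (hG : ∀ g ∈ G, ∀ x y, P x y → P (g x) (g y))
    (hf : ∀ x y, P x y → P (f x) (f y)) {h : Function.End (Fin n)} (hh : h ∈ genMon G f) :
    ∀ x y, P x y → P (h x) (h y) := by
  induction hh using Submonoid.closure_induction with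
  | mem w hw =>
    rcases hw with ⟨g, hg, rfl⟩ | rfl
    exacts [hG g hg, hf]
  | one => exact fun _ _ hxy => hxy
  | mul a b _ _ ha hb => exact fun x y hxy => ha _ _ (hb x y hxy)

theorem card_image_of_mem_genMon (hP : ∀ x y, P x y → x ≠ y)
    (hG : ∀ g ∈ G, ∀ x y, P x y → P (g x) (g y)) (hf : ∀ x y, P x y → P (f x) (f y))
    {h : Function.End (Fin n)} (hh : h ∈ genMon G f) {A : Finset (Fin n)}
    (hA : (A : Set (Fin n)).Pairwise P) : (A.image h).card = A.card :=
  card_image_of_injOn fun _ hx _ hy hxy =>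
    by_contra fun hne => hP _ _ (rel_map_of_mem_genMon hG hf hh _ _ (hA hx hy hne)) hxy

theorem not_separatesDisjointPairs_of_rel (hP : ∀ x y, P x y → x ≠ y)
    (hG : ∀ g ∈ G, ∀ x y, P x y → P (g x) (g y)) (hf : ∀ x y, P x y → P (f x) (f y))
    {A B : Finset (Fin n)} (hA : (A : Set (Fin n)).Pairwise P) (hB : (B : Set (Fin n)).Pairwise P)
    (hA2 : A.card = 2) (hB2 : B.card = 2) (hAB : Disjoint A B) :
    ¬ SeparatesDisjointPairs G f := by
  intro hsep
  obtain ⟨h, hh, hxor⟩ := hsep A B hA2 hB2 hAB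
  rw [card_image_of_mem_genMon hP hG hf hh hA, card_image_of_mem_genMon hP hG hf hh hB,
    hA2, hB2] at hxor
  exact (xor_self _).mp hxor

end Monoid

section Blocks

variable {G : Subgroup (Equiv.Perm (Fin n))} {Δ : Finset (Fin n)}

theorem IsBlockOf.image_eq_of_mem (hΔ : IsBlockOf G Δ) {g : Equiv.Perm (Fin n)} (hg : g ∈ G)
    {z : Fin n} (hz : z ∈ Δ) (hzg : z ∈ Δ.image g) : Δ.image g = Δ :=
  (hΔ g hg).resolve_right fun hdisj => disjoint_left.mp hdisj hzg hz

theorem IsBlockOf.not_separatesDisjointPairs_update (hΔ : IsBlockOf G Δ) {a b u v : Fin n}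
    (ha : a ∈ Δ) (hb : b ∈ Δ) (hu : u ∉ Δ) (hv : v ∉ Δ) (hab : a ≠ b) (huv : u ≠ v) :
    ¬ SeparatesDisjointPairs G (Function.update id a b) := by
  set P : Fin n → Fin n → Prop :=
    fun x y => x ≠ y ∧ ¬ ∃ g ∈ G, x ∈ Δ.image g ∧ y ∈ Δ.image g
  have hsymm : ∀ x y, P x y → P y x := fun x y ⟨hxy, hsep⟩ =>
    ⟨hxy.symm, fun ⟨g, hg, hy, hx⟩ => hsep ⟨g, hg, hx, hy⟩⟩
  have hout : ∀ x y, x ∈ Δ → y ∉ Δ → P x y := fun x y hx hy =>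
    ⟨fun hxy => hy (hxy ▸ hx), fun ⟨g, hg, hxg, hyg⟩ => hy (hΔ.image_eq_of_mem hg hx hxg ▸ hyg)⟩
  have hG : ∀ g ∈ G, ∀ x y, P x y → P (g x) (g y) := by
    rintro g hg x y ⟨hxy, hsep⟩
    refine ⟨g.injective.ne hxy, fun ⟨g', hg', hxg, hyg⟩ => hsep ⟨g⁻¹ * g', mul_mem (inv_mem hg) hg',
      ?_⟩⟩
    have hpull : ∀ z, g z ∈ Δ.image g' → z ∈ Δ.image ⇑(g⁻¹ * g') := fun z hz => by
      obtain ⟨d, hd, hdz⟩ := mem_image.mp hz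
      exact mem_image.mpr ⟨d, hd, by simp [hdz]⟩
    exact ⟨hpull x hxg, hpull y hyg⟩
  have hmerge : ∀ y, P a y → P b y := by
    intro y hay
    have hy : y ∉ Δ := fun hy => hay.2 ⟨1, one_mem G, by simpa using ha, by simpa using hy⟩
    exact hout b y hb hy
  have hf : ∀ x y, P x y → P (Function.update id a b x) (Function.update id a b y) := by
    intro x y hxy
    simp only [Function.update_apply, id]
    split_ifs with hx hy hy
    · exact absurd (hx.trans hy.symm) hxy.1
    · exact hmerge y (hx ▸ hxy)
    · exact hsymm _ _ (hmerge x (hy ▸ hsymm _ _ hxy))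
    · exact hxy
  have hpair : ∀ x y, x ∈ Δ → y ∉ Δ → ({x, y} : Finset (Fin n)).card = 2 ∧
      (({x, y} : Finset (Fin n)) : Set (Fin n)).Pairwise P := fun x y hx hy =>
    ⟨card_pair (hout x y hx hy).1, by
      rw [coe_pair, Set.pairwise_pair]; exact fun _ => ⟨hout x y hx hy, hsymm _ _ (hout x y hx hy)⟩⟩
  obtain ⟨hA2, hA⟩ := hpair a u ha hu
  obtain ⟨hB2, hB⟩ := hpair b v hb hv
  refine not_separatesDisjointPairs_of_rel (fun _ _ h => h.1) hG hf hA hB hA2 hB2 ?_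
  simp only [disjoint_insert_left, disjoint_insert_right, disjoint_singleton, mem_insert,
    mem_singleton, not_or]
  exact ⟨⟨hab.symm, fun h => hu (h ▸ hb)⟩, fun h => hv (h ▸ ha), huv⟩

theorem IsBlockOf.exists_fixed (hΔ : IsBlockOf G Δ) (hΔ2 : 2 ≤ Δ.card) (hΔn : Δ.card + 1 = n) :
    ∃ u ∉ Δ, ∀ g ∈ G, g u = u := by
  obtain ⟨u, hu⟩ : ∃ u, Δᶜ = {u} := card_eq_one.mp (by rw [card_compl, Fintype.card_fin]; omega)
  have huΔ : u ∉ Δ := by simpa using hu.ge (mem_singleton_self u)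
  refine ⟨u, huΔ, fun g hg => ?_⟩
  have hinv : Δ.image g = Δ := (hΔ g hg).resolve_right fun hdisj => by
    have := card_le_univ (Δ.image g ∪ Δ)
    rw [card_union_of_disjoint hdisj, card_image_of_injective _ g.injective,
      Fintype.card_fin] at this
    omega
  by_contra hgu
  have : g u ∈ Δ := by_contra fun h => hgu (mem_singleton.mp (hu ▸ mem_compl.mpr h))
  obtain ⟨d, hd, hdu⟩ := mem_image.mp (hinv.symm ▸ this)
  exact huΔ (g.injective hdu ▸ hd)

end Blocks

theorem not_separatesDisjointPairs_update_of_fixed {G : Subgroup (Equiv.Perm (Fin n))}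
    (hn : 5 ≤ n) {u c : Fin n} (hu : ∀ g ∈ G, g u = u) :
    ¬ SeparatesDisjointPairs G (Function.update id u c) := by
  set P : Fin n → Fin n → Prop := fun x y => x ≠ y ∧ x ≠ u ∧ y ≠ u
  have hG : ∀ g ∈ G, ∀ x y, P x y → P (g x) (g y) := by
    rintro g hg x y ⟨hxy, hx, hy⟩
    show g x ≠ g y ∧ g x ≠ u ∧ g y ≠ u
    rw [← hu g hg]
    exact ⟨g.injective.ne hxy, g.injective.ne hx, g.injective.ne hy⟩
  have hf : ∀ x y, P x y → P (Function.update id u c x) (Function.update id u c y) := by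
    rintro x y ⟨hxy, hx, hy⟩
    rw [Function.update_of_ne hx, Function.update_of_ne hy]
    exact ⟨hxy, hx, hy⟩
  have hpairwise : ∀ s ⊆ univ.erase u, (s : Set (Fin n)).Pairwise P := fun s hs x hx y hy hxy =>
    ⟨hxy, ne_of_mem_erase (hs hx), ne_of_mem_erase (hs hy)⟩
  have hcard : (univ.erase u).card = n - 1 := by
    rw [card_erase_of_mem (mem_univ u), card_univ, Fintype.card_fin]
  obtain ⟨A, hA, hA2⟩ := exists_subset_card_eq (s := univ.erase u) (n := 2) (by omega)
  obtain ⟨B, hB, hB2⟩ := exists_subset_card_eq (s := univ.erase u \ A) (n := 2)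
    (by rw [card_sdiff_of_subset hA]; omega)
  exact not_separatesDisjointPairs_of_rel (fun _ _ h => h.1) hG hf (hpairwise A hA)
    (hpairwise B (hB.trans sdiff_subset)) hA2 hB2 (disjoint_of_subset_right hB disjoint_sdiff)

theorem disjoint_2_set_distinguishable_implies_primitive {n : ℕ} (hn : 5 ≤ n)
    (G : Subgroup (Equiv.Perm (Fin n)))
    (H : ∀ f : Fin n → Fin n, (univ.image f).card = n - 1 →
      ∀ A B : Finset (Fin n), A.card = 2 → B.card = 2 → Disjoint A B →
        ∃ h ∈ genMon G f, Xor' ((A.image h).card = 1) ((B.image h).card = 1)) :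
    IsPrimitive' G := by
  rintro ⟨Δ, hΔ1, hΔn, hblock⟩
  have hrank : ∀ {a b : Fin n}, a ≠ b → (univ.image (Function.update id a b)).card = n - 1 :=
    fun hab => (card_image_update_id hab).trans (by rw [Fintype.card_fin])
  obtain ⟨a, ha, b, hb, hab⟩ := one_lt_card.mp hΔ1
  by_cases hsmall : Δ.card + 2 ≤ n
  · obtain ⟨u, hu, v, hv, huv⟩ :=
      one_lt_card.mp (show 1 < Δᶜ.card by rw [card_compl, Fintype.card_fin]; omega)
    exact IsBlockOf.not_separatesDisjointPairs_update hblock ha hb (mem_compl.mp hu)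
      (mem_compl.mp hv) hab huv (H _ (hrank hab))
  · obtain ⟨u, hu, hfix⟩ := IsBlockOf.exists_fixed hblock hΔ1 (by omega)
    have hau : a ≠ u := fun h => hu (h ▸ ha)
    exact not_separatesDisjointPairs_update_of_fixed hn hfix (H _ (hrank hau.symm))
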